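/- Sum AMSE transfer from downlink to uplink: in the multiuser MIMO setup, given downlink power allocations P_1,…,P_K, let β̃ = (Σ_{k=1}^K tr(P_k)) / (Σ_{k=1}^K Re tr(P_k⁻¹ α_k²)) and define the uplink power allocations Q_k = β̃·α_k²·P_k⁻¹ for every k. Then the uplink sum AMSE equals the downlink sum AMSE, ξ̄^{UL} = ξ̄^{DL}, and the same sum power is allocated in both channels: Σ_{k=1}^K tr(Q_k) = Σ_{k=1}^K tr(P_k). -/

import Mathlib

open Matrix BigOperators ComplexOrder

noncomputable section

/-- A diagonal complex matrix built from a real vector. -/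
def diagC {n : ℕ} (v : Fin n → ℝ) : Matrix (Fin n) (Fin n) ℂ :=
  Matrix.diagonal (fun i => (v i : ℂ))

/-- The multiuser MIMO setup: `K` users, `N` BS antennas, per-user antenna counts `M k`,
symbol counts `S k`, estimated channels `H k`, transmit/receive filters `G k`, `U k` with
unit-norm columns, invertible real diagonal scaling factors `α k`, Hermitian positive
semidefinite antenna correlation matrices `Rb k`, `Rm k`, channel estimation error variances
`σe2 k ≥ 0` and noise variance `σ2 > 0`. -/
structure MIMOSetup (K N : ℕ) where
  M : Fin K → ℕ
  S : Fin K → ℕ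
  hM : ∀ k, 0 < M k
  hS : ∀ k, 0 < S k
  H : ∀ k : Fin K, Matrix (Fin N) (Fin (M k)) ℂ
  G : ∀ k : Fin K, Matrix (Fin N) (Fin (S k)) ℂ
  U : ∀ k : Fin K, Matrix (Fin (M k)) (Fin (S k)) ℂ
  α : ∀ k : Fin K, Fin (S k) → ℝ
  Rb : Fin K → Matrix (Fin N) (Fin N) ℂ
  Rm : ∀ k : Fin K, Matrix (Fin (M k)) (Fin (M k)) ℂ
  σe2 : Fin K → ℝ
  σ2 : ℝ
  hG : ∀ k i, ((G k)ᴴ * G k) i i = 1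
  hU : ∀ k i, ((U k)ᴴ * U k) i i = 1
  hα : ∀ k i, α k i ≠ 0
  hRb : ∀ k, (Rb k).PosSemidef
  hRm : ∀ k, (Rm k).PosSemidef
  hσe2 : ∀ k, 0 ≤ σe2 k
  hσ2 : 0 < σ2

namespace MIMOSetup

variable {K N : ℕ} (s : MIMOSetup K N)

/-- `α_k` as a diagonal complex matrix. -/
def αM (k : Fin K) : Matrix (Fin (s.S k)) (Fin (s.S k)) ℂ := diagC (s.α k)

/-- `Γ_k^{DL}` for downlink power allocations `P`. -/
def GammaDL (P : ∀ k : Fin K, Matrix (Fin (s.S k)) (Fin (s.S k)) ℂ) (k : Fin K) :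
    Matrix (Fin (s.M k)) (Fin (s.M k)) ℂ :=
  (s.H k)ᴴ * (∑ i, s.G i * P i * (s.G i)ᴴ) * s.H k
    + ((s.σe2 k : ℂ) * (s.Rb k * ∑ i, s.G i * P i * (s.G i)ᴴ).trace) • s.Rm k
    + (s.σ2 : ℂ) • 1

/-- `Γ_c` for uplink power allocations `Q`. -/
def GammaC (Q : ∀ k : Fin K, Matrix (Fin (s.S k)) (Fin (s.S k)) ℂ) :
    Matrix (Fin N) (Fin N) ℂ :=
  (∑ i, (s.H i * s.U i * Q i * (s.U i)ᴴ * (s.H i)ᴴ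
    + ((s.σe2 i : ℂ) * (s.Rm i * (s.U i * Q i * (s.U i)ᴴ)).trace) • s.Rb i))
    + (s.σ2 : ℂ) • 1

/-- The `k`-th user downlink AMSE `ξ̄_k^{DL}`. -/
def xiDLk (P : ∀ k : Fin K, Matrix (Fin (s.S k)) (Fin (s.S k)) ℂ) (k : Fin K) : ℝ :=
  (s.S k : ℝ) + (((P k)⁻¹ * (s.αM k) ^ 2 * (s.U k)ᴴ * s.GammaDL P k * s.U k).trace).re
    - 2 * ((((s.G k)ᴴ * s.H k * s.U k * s.αM k).trace).re)

/-- The `k`-th user uplink AMSE `ξ̄_k^{UL}`. -/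
def xiULk (Q : ∀ k : Fin K, Matrix (Fin (s.S k)) (Fin (s.S k)) ℂ) (k : Fin K) : ℝ :=
  (s.S k : ℝ) + (((Q k)⁻¹ * (s.αM k) ^ 2 * (s.G k)ᴴ * s.GammaC Q * s.G k).trace).re
    - 2 * (((s.αM k * (s.G k)ᴴ * s.H k * s.U k).trace).re)

/-- Downlink sum AMSE `ξ̄^{DL}`. -/
def xiDL (P : ∀ k : Fin K, Matrix (Fin (s.S k)) (Fin (s.S k)) ℂ) : ℝ := ∑ k, s.xiDLk P k

/-- Uplink sum AMSE `ξ̄^{UL}`. -/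
def xiUL (Q : ∀ k : Fin K, Matrix (Fin (s.S k)) (Fin (s.S k)) ℂ) : ℝ := ∑ k, s.xiULk Q k

end MIMOSetup

/-! Cyclicity of the trace gives the uplink–downlink duality
`tr(Γ_c T) + σ² Σ_k tr(Q_k U_kᴴ U_k) = Σ_k tr(Q_k U_kᴴ Γ_k^{DL} U_k) + σ² tr T`, where
`T = Σ_k G_k P_k G_kᴴ` is the downlink transmit covariance. With `Q_k = β̃ P_k⁻¹ α_k²` one has
`Q_k⁻¹ α_k² = β̃⁻¹ P_k`, so the uplink quadratic term is `β̃⁻¹ tr(Γ_c T)`, and by duality it differs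
from the downlink one by `σ² (β̃⁻¹ tr T - Σ_k tr(P_k⁻¹ α_k² U_kᴴ U_k))`. Since the columns of `G_k`
and `U_k` have unit norm, this is `σ² (β̃⁻¹ Σ_k tr P_k - Σ_k tr(P_k⁻¹ α_k²))`, which vanishes for
the chosen `β̃`; the same choice balances the sum powers. The linear terms agree by cyclicity. -/

namespace Matrix

theorem trace_mul_sum_mul_mul {R ι n : Type*} {m : ι → Type*} [Fintype ι] [Fintype n]
    [∀ k, Fintype (m k)] [CommSemiring R] (X : Matrix n n R) (A : ∀ k, Matrix n (m k) R)
    (W : ∀ k, Matrix (m k) (m k) R) (B : ∀ k, Matrix (m k) n R) :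
    (X * ∑ k, A k * W k * B k).trace = ∑ k, (W k * B k * X * A k).trace := by
  rw [Matrix.mul_sum, trace_sum]
  refine Finset.sum_congr rfl fun k _ => ?_
  simpa only [Matrix.mul_assoc] using trace_mul_comm (X * A k) (W k * B k)

end Matrix

section diagC

variable {n : ℕ}

theorem diagC_mul (v w : Fin n → ℝ) : diagC v * diagC w = diagC (v * w) := by
  simp [diagC, diagonal_mul_diagonal]

theorem diagC_pow (v : Fin n → ℝ) (k : ℕ) : diagC v ^ k = diagC (v ^ k) := by
  simp [diagC, diagonal_pow]

theorem diagC_one : diagC (1 : Fin n → ℝ) = 1 := by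
  simp [diagC]

theorem diagC_inv {v : Fin n → ℝ} (hv : ∀ i, v i ≠ 0) : (diagC v)⁻¹ = diagC v⁻¹ := by
  refine inv_eq_right_inv ?_
  have : v * v⁻¹ = 1 := funext fun i => mul_inv_cancel₀ (hv i)
  rw [diagC_mul, this, diagC_one]

theorem smul_diagC (r : ℝ) (v : Fin n → ℝ) : (r : ℂ) • diagC v = diagC (r • v) := by
  ext i j
  by_cases h : i = j <;> simp [diagC, h]

theorem trace_diagC (v : Fin n → ℝ) : (diagC v).trace = ((∑ i, v i : ℝ) : ℂ) := by
  simp [diagC, trace_diagonal]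

theorem trace_diagC_mul_of_diag_eq_one (v : Fin n → ℝ) {A : Matrix (Fin n) (Fin n) ℂ}
    (hA : ∀ i, A i i = 1) : (diagC v * A).trace = (diagC v).trace := by
  simp [trace, diagC, diagonal_mul, hA]

end diagC

theorem Finset.sum_sum_pos_of_pos {K : ℕ} {S : Fin K → ℕ} (hK : 0 < K) (hS : ∀ k, 0 < S k)
    {f : ∀ k, Fin (S k) → ℝ} (hf : ∀ k i, 0 < f k i) : 0 < ∑ k, ∑ i, f k i :=
  Finset.sum_pos (fun k _ => Finset.sum_pos (fun i _ => hf k i) ⟨⟨0, hS k⟩, Finset.mem_univ _⟩)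
    ⟨⟨0, hK⟩, Finset.mem_univ _⟩

namespace MIMOSetup

variable {K N : ℕ} (s : MIMOSetup K N)

def transmitCov (P : ∀ k : Fin K, Matrix (Fin (s.S k)) (Fin (s.S k)) ℂ) :
    Matrix (Fin N) (Fin N) ℂ :=
  ∑ i, s.G i * P i * (s.G i)ᴴ

theorem GammaDL_eq (P : ∀ k : Fin K, Matrix (Fin (s.S k)) (Fin (s.S k)) ℂ) (k : Fin K) :
    s.GammaDL P k = (s.H k)ᴴ * s.transmitCov P * s.H k
      + ((s.σe2 k : ℂ) * (s.Rb k * s.transmitCov P).trace) • s.Rm k + (s.σ2 : ℂ) • 1 :=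
  rfl

theorem trace_mul_GammaDL (P : ∀ k : Fin K, Matrix (Fin (s.S k)) (Fin (s.S k)) ℂ) (k : Fin K)
    (Q : Matrix (Fin (s.S k)) (Fin (s.S k)) ℂ) :
    (Q * (s.U k)ᴴ * s.GammaDL P k * s.U k).trace
      = (s.H k * s.U k * Q * (s.U k)ᴴ * (s.H k)ᴴ * s.transmitCov P).trace
        + s.σe2 k * (s.Rm k * (s.U k * Q * (s.U k)ᴴ)).trace * (s.Rb k * s.transmitCov P).trace
        + s.σ2 * (Q * (s.U k)ᴴ * s.U k).trace := by
  have hH : (Q * (s.U k)ᴴ * ((s.H k)ᴴ * s.transmitCov P * s.H k) * s.U k).trace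
      = (s.H k * s.U k * Q * (s.U k)ᴴ * (s.H k)ᴴ * s.transmitCov P).trace := by
    simpa only [Matrix.mul_assoc] using
      trace_mul_comm (Q * (s.U k)ᴴ * (s.H k)ᴴ * s.transmitCov P) (s.H k * s.U k)
  have hR : (Q * (s.U k)ᴴ * s.Rm k * s.U k).trace = (s.Rm k * (s.U k * Q * (s.U k)ᴴ)).trace := by
    simpa only [Matrix.mul_assoc] using trace_mul_comm (Q * (s.U k)ᴴ) (s.Rm k * s.U k)
  simp only [GammaDL_eq, Matrix.mul_add, Matrix.add_mul, Matrix.mul_smul,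
    Matrix.smul_mul, Matrix.mul_one, trace_add, trace_smul, smul_eq_mul, hH, hR]
  ring

theorem trace_GammaC_mul (Q : ∀ k : Fin K, Matrix (Fin (s.S k)) (Fin (s.S k)) ℂ)
    (T : Matrix (Fin N) (Fin N) ℂ) :
    (s.GammaC Q * T).trace
      = ∑ k, ((s.H k * s.U k * Q k * (s.U k)ᴴ * (s.H k)ᴴ * T).trace
        + s.σe2 k * (s.Rm k * (s.U k * Q k * (s.U k)ᴴ)).trace * (s.Rb k * T).trace)
        + s.σ2 * T.trace := by
  simp only [GammaC, Matrix.add_mul, Matrix.sum_mul, Matrix.smul_mul, Matrix.one_mul,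
    trace_add, trace_sum, trace_smul, smul_eq_mul, mul_assoc]

theorem trace_GammaC_mul_transmitCov_add
    (P Q : ∀ k : Fin K, Matrix (Fin (s.S k)) (Fin (s.S k)) ℂ) :
    (s.GammaC Q * s.transmitCov P).trace + s.σ2 * ∑ k, (Q k * (s.U k)ᴴ * s.U k).trace
      = ∑ k, (Q k * (s.U k)ᴴ * s.GammaDL P k * s.U k).trace + s.σ2 * (s.transmitCov P).trace := by
  simp only [trace_GammaC_mul, trace_mul_GammaDL, Finset.sum_add_distrib, Finset.mul_sum]
  ring

theorem sum_trace_uplink_eq_downlink (P V : ∀ k : Fin K, Matrix (Fin (s.S k)) (Fin (s.S k)) ℂ)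
    {β : ℂ} (hβ : β ≠ 0)
    (hbal : β⁻¹ * (s.transmitCov P).trace = ∑ k, (V k * (s.U k)ᴴ * s.U k).trace) :
    ∑ k, (β⁻¹ • P k * (s.G k)ᴴ * s.GammaC (fun k => β • V k) * s.G k).trace
      = ∑ k, (V k * (s.U k)ᴴ * s.GammaDL P k * s.U k).trace := by
  have hdual := s.trace_GammaC_mul_transmitCov_add P (fun k => β • V k)
  simp only [Matrix.smul_mul, trace_smul, smul_eq_mul, ← Finset.mul_sum] at hdual ⊢
  rw [← trace_mul_sum_mul_mul, ← transmitCov.eq_1]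
  linear_combination β⁻¹ * hdual + s.σ2 * hbal
    + (∑ k, (V k * (s.U k)ᴴ * s.GammaDL P k * s.U k).trace
      - s.σ2 * ∑ k, (V k * (s.U k)ᴴ * s.U k).trace) * inv_mul_cancel₀ hβ

theorem xiUL_eq_xiDL_of_sum_trace_eq (P Q : ∀ k : Fin K, Matrix (Fin (s.S k)) (Fin (s.S k)) ℂ)
    (h : ∑ k, ((Q k)⁻¹ * s.αM k ^ 2 * (s.G k)ᴴ * s.GammaC Q * s.G k).trace
      = ∑ k, ((P k)⁻¹ * s.αM k ^ 2 * (s.U k)ᴴ * s.GammaDL P k * s.U k).trace) :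
    s.xiUL Q = s.xiDL P := by
  have hlin : ∀ k, (s.αM k * (s.G k)ᴴ * s.H k * s.U k).trace
      = ((s.G k)ᴴ * s.H k * s.U k * s.αM k).trace := fun k => by
    simpa only [Matrix.mul_assoc] using trace_mul_comm (s.αM k) ((s.G k)ᴴ * s.H k * s.U k)
  simp only [xiUL, xiDL, xiULk, xiDLk, Finset.sum_sub_distrib, Finset.sum_add_distrib,
    ← Complex.re_sum, h, hlin]

theorem trace_transmitCov_diagC (v : ∀ k : Fin K, Fin (s.S k) → ℝ) :
    (s.transmitCov fun k => diagC (v k)).trace = ((∑ k, ∑ i, v k i : ℝ) : ℂ) := by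
  simpa [transmitCov, Matrix.mul_assoc, trace_diagC_mul_of_diag_eq_one _ (s.hG _), trace_diagC]
    using trace_mul_sum_mul_mul 1 s.G (fun k => diagC (v k)) (fun k => (s.G k)ᴴ)

theorem sum_trace_diagC_mul_U (v : ∀ k : Fin K, Fin (s.S k) → ℝ) :
    ∑ k, (diagC (v k) * (s.U k)ᴴ * s.U k).trace = ((∑ k, ∑ i, v k i : ℝ) : ℂ) := by
  simp [Matrix.mul_assoc, trace_diagC_mul_of_diag_eq_one _ (s.hU _), trace_diagC]

def dualPower (P : ∀ k : Fin K, Fin (s.S k) → ℝ) (k : Fin K) : Fin (s.S k) → ℝ :=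
  (P k)⁻¹ * s.α k ^ 2

theorem dualPower_pos {P : ∀ k : Fin K, Fin (s.S k) → ℝ} (hP : ∀ k i, 0 < P k i) (k : Fin K)
    (i : Fin (s.S k)) : 0 < s.dualPower P k i := by
  have := s.hα k i
  have := hP k i
  simp only [dualPower, Pi.mul_apply, Pi.inv_apply, Pi.pow_apply]
  positivity

theorem inv_diagC_mul_αM_sq {P : ∀ k : Fin K, Fin (s.S k) → ℝ} (hP : ∀ k i, P k i ≠ 0)
    (k : Fin K) : (diagC (P k))⁻¹ * s.αM k ^ 2 = diagC (s.dualPower P k) := by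
  rw [diagC_inv (hP k), αM, diagC_pow, diagC_mul, dualPower]

theorem αM_sq_mul_inv_diagC {P : ∀ k : Fin K, Fin (s.S k) → ℝ} (hP : ∀ k i, P k i ≠ 0)
    (k : Fin K) : s.αM k ^ 2 * (diagC (P k))⁻¹ = diagC (s.dualPower P k) := by
  rw [αM, diagC_pow, diagC_inv (hP k), diagC_mul, mul_comm, dualPower]

theorem inv_smul_diagC_mul_αM_sq {P : ∀ k : Fin K, Fin (s.S k) → ℝ} (hP : ∀ k i, P k i ≠ 0)
    (k : Fin K) {β : ℝ} (hβ : β ≠ 0) :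
    ((β : ℂ) • diagC (s.dualPower P k))⁻¹ * s.αM k ^ 2 = (β : ℂ)⁻¹ • diagC (P k) := by
  have hβv : ∀ i, (β • s.dualPower P k) i ≠ 0 := fun i => by
    simp [dualPower, hβ, hP k i, s.hα k i]
  rw [smul_diagC, diagC_inv hβv, αM, diagC_pow, diagC_mul, ← Complex.ofReal_inv, smul_diagC]
  congr 1
  funext i
  simp only [dualPower, Pi.mul_apply, Pi.inv_apply, Pi.pow_apply, Pi.smul_apply, smul_eq_mul]
  field_simp [s.hα k i]

end MIMOSetup

theorem sum_AMSE_transfer_downlink_to_uplink_general {K N : ℕ} (hK : 0 < K)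
    (s : MIMOSetup K N)
    (P : ∀ k : Fin K, Fin (s.S k) → ℝ) (hP : ∀ k i, 0 < P k i)
    (βt : ℝ)
    (hβt : βt = (∑ k, ((diagC (P k)).trace).re) /
      (∑ k, (((diagC (P k))⁻¹ * (s.αM k) ^ 2).trace).re))
    (Q : ∀ k : Fin K, Matrix (Fin (s.S k)) (Fin (s.S k)) ℂ)
    (hQ : ∀ k, Q k = (βt : ℂ) • ((s.αM k) ^ 2 * (diagC (P k))⁻¹)) :
    s.xiUL Q = s.xiDL (fun k => diagC (P k)) ∧
      ∑ k, (Q k).trace = ∑ k, (diagC (P k)).trace := by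
  have hP0 : ∀ k i, P k i ≠ 0 := fun k i => (hP k i).ne'
  have ha : 0 < ∑ k, ∑ i, P k i := Finset.sum_sum_pos_of_pos hK s.hS hP
  have hb : 0 < ∑ k, ∑ i, s.dualPower P k i :=
    Finset.sum_sum_pos_of_pos hK s.hS (s.dualPower_pos hP)
  have hβ : βt = (∑ k, ∑ i, P k i) / ∑ k, ∑ i, s.dualPower P k i := by
    simp only [hβt, s.inv_diagC_mul_αM_sq hP0, trace_diagC, Complex.ofReal_re]
  have hβ0 : βt ≠ 0 := by rw [hβ]; positivity
  have hQV : Q = fun k => (βt : ℂ) • diagC (s.dualPower P k) :=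
    funext fun k => by rw [hQ, s.αM_sq_mul_inv_diagC hP0]
  subst hQV
  constructor
  · apply s.xiUL_eq_xiDL_of_sum_trace_eq
    simp only [s.inv_smul_diagC_mul_αM_sq hP0 _ hβ0, s.inv_diagC_mul_αM_sq hP0]
    refine s.sum_trace_uplink_eq_downlink _ _ (by exact_mod_cast hβ0) ?_
    rw [s.trace_transmitCov_diagC, s.sum_trace_diagC_mul_U]
    exact_mod_cast
      (show βt⁻¹ * ∑ k, ∑ i, P k i = ∑ k, ∑ i, s.dualPower P k i by rw [hβ]; field_simp)
  · simp only [trace_smul, trace_diagC, smul_eq_mul, ← Finset.mul_sum, ← Complex.ofReal_sum]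
    exact_mod_cast
      (show βt * ∑ k, ∑ i, s.dualPower P k i = ∑ k, ∑ i, P k i by rw [hβ]; field_simp)

/-- **Sum AMSE transfer from downlink to uplink.** Given downlink power allocations
`P_1, …, P_K`, with `β̃ = (Σ_k tr P_k) / (Σ_k Re tr (P_k⁻¹ α_k²))` and uplink power
allocations `Q_k = β̃ • α_k² P_k⁻¹`, the uplink sum AMSE equals the downlink sum AMSE and
the same sum power is allocated in both channels. -/
theorem sum_AMSE_transfer_downlink_to_uplink {K N : ℕ} (hK : 0 < K) (hN : 0 < N)
    (s : MIMOSetup K N)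
    (P : ∀ k : Fin K, Fin (s.S k) → ℝ) (hP : ∀ k i, 0 < P k i)
    (βt : ℝ)
    (hβt : βt = (∑ k, ((diagC (P k)).trace).re) /
      (∑ k, (((diagC (P k))⁻¹ * (s.αM k) ^ 2).trace).re))
    (Q : ∀ k : Fin K, Matrix (Fin (s.S k)) (Fin (s.S k)) ℂ)
    (hQ : ∀ k, Q k = (βt : ℂ) • ((s.αM k) ^ 2 * (diagC (P k))⁻¹)) :
    s.xiUL Q = s.xiDL (fun k => diagC (P k)) ∧
      ∑ k, (Q k).trace = ∑ k, (diagC (P k)).trace :=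
  sum_AMSE_transfer_downlink_to_uplink_general hK s P hP βt hβt Q hQ
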